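/- A De Morgan clone C with DMA ⊆ C contains a protoimplication if and only if C contains one of the functions □, ↔_{t-min}, ↔_{i-min}. -/
import Mathlib


set_option autoImplicit false

/-- The four truth values of the Belnap–Dunn logic. -/
inductive DM4 : Type
  | t
  | f
  | n
  | b
deriving DecidableEq

namespace DM4

/-- De Morgan negation. -/
def neg : DM4 → DM4
  | t => f
  | f => t
  | n => n
  | b => b

/-- Conflation. -/
def conf : DM4 → DM4
  | t => t
  | f => f
  | n => b
  | b => n

/-- Meet in the truth order. -/
def meet : DM4 → DM4 → DM4
  | f, _ => f
  | _, f => f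
  | t, y => y
  | x, t => x
  | n, n => n
  | b, b => b
  | n, b => f
  | b, n => f

/-- Join in the truth order. -/
def join : DM4 → DM4 → DM4
  | t, _ => t
  | _, t => t
  | f, y => y
  | x, f => x
  | n, n => n
  | b, b => b
  | n, b => t
  | b, n => t

/-- Meet in the information order (⊗). -/
def imeet : DM4 → DM4 → DM4
  | n, _ => n
  | _, n => n
  | b, y => y
  | x, b => x
  | t, t => t
  | f, f => f
  | t, f => n
  | f, t => n

/-- Join in the information order (⊕). -/
def ijoin : DM4 → DM4 → DM4
  | b, _ => b
  | _, b => b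
  | n, y => y
  | x, n => x
  | t, t => t
  | f, f => f
  | t, f => b
  | f, t => b

/-- The truth order: least element `f`, greatest element `t`, with `n`, `b` incomparable. -/
def tle (x y : DM4) : Prop := x = y ∨ x = f ∨ y = t

/-- The information order: least element `n`, greatest element `b`, with `t`, `f` incomparable. -/
def ile (x y : DM4) : Prop := x = y ∨ x = n ∨ y = b

/-- □: maps t to t and everything else to f. -/
def box : DM4 → DM4
  | t => t
  | _ => f

/-- ◇: maps f to f and everything else to t. -/
def diamond : DM4 → DM4
  | f => f
  | _ => t

/-- Δ: maps t, b to t and n, f to f. -/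
def delta : DM4 → DM4
  | t => t
  | b => t
  | _ => f

/-- ∇: maps t, n to t and b, f to f. -/
def nabla : DM4 → DM4
  | t => t
  | n => t
  | _ => f

/-- id_{b↦n}: maps b to n and fixes t, f, n. -/
def idbn : DM4 → DM4
  | b => n
  | x => x

/-- id_{n↦b}: maps n to b and fixes t, f, b. -/
def idnb : DM4 → DM4
  | n => b
  | x => x

/-- id_{n↦t}: maps n to t and fixes t, f, b. -/
def idnt : DM4 → DM4
  | n => t
  | x => x

/-- id_{b↦t}: maps b to t and fixes t, f, n. -/
def idbt : DM4 → DM4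
  | b => t
  | x => x

/-- t_{n↦n}: maps n to n and everything else to t. -/
def tnn : DM4 → DM4
  | n => n
  | _ => t

/-- t_{b↦b}: maps b to b and everything else to t. -/
def tbb : DM4 → DM4
  | b => b
  | _ => t

/-- The binary function pbp²₁. -/
def pbp1 : DM4 → DM4 → DM4
  | t, t => t | t, f => f | t, n => f | t, b => b
  | f, t => t | f, f => f | f, n => f | f, b => b
  | n, t => t | n, f => f | n, n => n | n, b => b
  | b, t => b | b, f => f | b, n => f | b, b => b

/-- The binary function pbp²₂. -/
def pbp2 : DM4 → DM4 → DM4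
  | t, t => t | t, f => f | t, n => n | t, b => f
  | f, t => t | f, f => f | f, n => n | f, b => f
  | n, t => n | n, f => f | n, n => n | n, b => f
  | b, t => t | b, f => f | b, n => n | b, b => b

/-- The binary function mnh²₁. -/
def mnh1 : DM4 → DM4 → DM4
  | t, t => f | t, f => f | t, n => n | t, b => b
  | f, t => f | f, f => f | f, n => n | f, b => b
  | n, t => f | n, f => f | n, n => n | n, b => f
  | b, t => f | b, f => f | b, n => n | b, b => b

/-- The binary function mnh²₂. -/
def mnh2 : DM4 → DM4 → DM4
  | t, t => f | t, f => f | t, n => n | t, b => b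
  | f, t => f | f, f => f | f, n => n | f, b => b
  | n, t => f | n, f => f | n, n => n | n, b => b
  | b, t => f | b, f => f | b, n => f | b, b => b

/-- The binary function mhnp². -/
def mhnp2 : DM4 → DM4 → DM4
  | t, _ => t
  | f, _ => t
  | n, b => f
  | n, _ => n
  | b, n => f
  | b, _ => b

/-- The binary function mnp²₁. -/
def mnp1 : DM4 → DM4 → DM4
  | t, b => b
  | t, _ => t
  | f, b => b
  | f, _ => t
  | n, b => f
  | n, _ => n
  | b, n => f
  | b, _ => b

/-- The binary function mnp²₂. -/
def mnp2 : DM4 → DM4 → DM4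
  | t, _ => t
  | f, _ => t
  | n, _ => n
  | b, n => f
  | b, _ => b

/-- The binary function mnp²₃. -/
def mnp3 : DM4 → DM4 → DM4
  | t, n => n
  | t, _ => t
  | f, n => n
  | f, _ => t
  | n, b => f
  | n, _ => n
  | b, n => f
  | b, _ => b

/-- The binary function mnp²₄. -/
def mnp4 : DM4 → DM4 → DM4
  | t, _ => t
  | f, _ => t
  | n, b => f
  | n, _ => n
  | b, _ => b

/-- The ternary function mhnp³. -/
def mhnp3 : DM4 → DM4 → DM4 → DM4
  | _, t, _ => f
  | _, f, _ => f
  | t, n, _ => n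
  | f, n, _ => f
  | b, n, _ => f
  | n, n, b => f
  | n, n, _ => n
  | t, b, _ => b
  | f, b, _ => f
  | n, b, _ => f
  | b, b, n => f
  | b, b, _ => b

/-- The set of designated values. -/
def Des : Set DM4 := {t, b}

/-- Designatedness as a Boolean predicate. -/
def des : DM4 → Bool
  | t => true
  | b => true
  | _ => false

/-- The protoimplication →_{t-max}. -/
def tmax (x y : DM4) : DM4 :=
  match des x, des y with
  | true, false => n
  | _, _ => t

/-- The protoimplication →_{i-max}. -/
def imax (x y : DM4) : DM4 :=
  match des x, des y with
  | true, false => f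
  | _, _ => b

/-- The protoimplication ↔_{t-min}. -/
def tmin (x y : DM4) : DM4 := if x = y then b else f

/-- The protoimplication ↔_{i-min}. -/
def imin (x y : DM4) : DM4 := if x = y then t else n

/-- A binary operation is a protoimplication if it satisfies Reflexivity and Modus Ponens
with respect to the designated set {t, b}. -/
def IsProtoimplication (r : DM4 → DM4 → DM4) : Prop :=
  (∀ a : DM4, r a a ∈ Des) ∧ ∀ a c : DM4, a ∈ Des → r a c ∈ Des → c ∈ Des

/-- `DMFun k` is the type of De Morgan functions of arity `k + 1` (arities are positive). -/
abbrev DMFun (k : ℕ) : Type := (Fin (k + 1) → DM4) → DM4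

/-- Membership in the clone generated by the family of operations `S`
(`S k` is the set of generators of arity `k + 1`). -/
inductive InClone (S : ∀ k : ℕ, Set (DMFun k)) : ∀ k : ℕ, DMFun k → Prop
  | base {k : ℕ} {g : DMFun k} : g ∈ S k → InClone S k g
  | proj {k : ℕ} (i : Fin (k + 1)) : InClone S k (fun x => x i)
  | comp {k m : ℕ} {g : DMFun m} {h : Fin (m + 1) → DMFun k} :
      InClone S m g → (∀ i, InClone S k (h i)) →
      InClone S k (fun x => g (fun i => h i x))

/-- A family of sets of De Morgan functions is a clone if it contains all projections
and is closed under composition. -/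
structure IsClone (C : ∀ k : ℕ, Set (DMFun k)) : Prop where
  proj : ∀ (k : ℕ) (i : Fin (k + 1)), (fun x => x i) ∈ C k
  comp : ∀ (k m : ℕ) (g : DMFun m) (h : Fin (m + 1) → DMFun k),
      g ∈ C m → (∀ i, h i ∈ C k) → (fun x => g (fun i => h i x)) ∈ C k

/-- The generating family consisting of a single unary operation. -/
def op1 (g : DM4 → DM4) : ∀ k : ℕ, Set (DMFun k)
  | 0 => {fun x => g (x 0)}
  | _ + 1 => ∅

/-- The generating family consisting of a single binary operation. -/
def op2 (g : DM4 → DM4 → DM4) : ∀ k : ℕ, Set (DMFun k)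
  | 1 => {fun x => g (x 0) (x 1)}
  | _ => ∅

/-- The generating family consisting of a single ternary operation. -/
def op3 (g : DM4 → DM4 → DM4 → DM4) : ∀ k : ℕ, Set (DMFun k)
  | 2 => {fun x => g (x 0) (x 1) (x 2)}
  | _ => ∅

/-- Union of two families of operations. -/
def funion (S T : ∀ k : ℕ, Set (DMFun k)) : ∀ k : ℕ, Set (DMFun k) := fun k => S k ∪ T k

infixr:65 " ⊹ " => funion

/-- The generators of DLat: ∧, ∨, t, f (constants as unary constant functions). -/
def DLatGen : ∀ k : ℕ, Set (DMFun k) :=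
  op2 meet ⊹ op2 join ⊹ op1 (fun _ => t) ⊹ op1 (fun _ => f)

/-- The generators of DMA: ∧, ∨, t, f, −. -/
def DMAGen : ∀ k : ℕ, Set (DMFun k) := DLatGen ⊹ op1 neg

/-- The generators of BiLat: ∧, ∨, t, f, ⊗, ⊕, n, b. -/
def BiLatGen : ∀ k : ℕ, Set (DMFun k) :=
  DLatGen ⊹ op2 imeet ⊹ op2 ijoin ⊹ op1 (fun _ => n) ⊹ op1 (fun _ => b)

/-- A De Morgan function is harmonious if it commutes with conflation. -/
def Harmonious {k : ℕ} (g : DMFun k) : Prop :=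
  ∀ x : Fin (k + 1) → DM4, g (fun i => conf (x i)) = conf (g x)

/-- A De Morgan function is positive if it is monotone in the componentwise truth order. -/
def Positive {k : ℕ} (g : DMFun k) : Prop :=
  ∀ x y : Fin (k + 1) → DM4, (∀ i, tle (x i) (y i)) → tle (g x) (g y)

/-- A De Morgan function is persistent if it is monotone in the componentwise
information order. -/
def Persistent {k : ℕ} (g : DMFun k) : Prop :=
  ∀ x y : Fin (k + 1) → DM4, (∀ i, ile (x i) (y i)) → ile (g x) (g y)

/-- A De Morgan function preserves a subset X of DM4 if it maps tuples from X into X. -/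
def Preserves {k : ℕ} (g : DMFun k) (X : Set DM4) : Prop :=
  ∀ x : Fin (k + 1) → DM4, (∀ i, x i ∈ X) → g x ∈ X

def B2 : Set DM4 := {t, f}
def K3 : Set DM4 := {t, n, f}
def P3 : Set DM4 := {t, b, f}

/-- A unary operation as a De Morgan function. -/
def toF1 (g : DM4 → DM4) : DMFun 0 := fun x => g (x 0)

/-- A binary operation as a De Morgan function. -/
def toF2 (g : DM4 → DM4 → DM4) : DMFun 1 := fun x => g (x 0) (x 1)

/-- A ternary operation as a De Morgan function. -/
def toF3 (g : DM4 → DM4 → DM4 → DM4) : DMFun 2 := fun x => g (x 0) (x 1) (x 2)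

/-- The clone generated by a family of operations, as a family of sets. -/
def CloneOf (S : ∀ k : ℕ, Set (DMFun k)) : ∀ k : ℕ, Set (DMFun k) :=
  fun k => {g | InClone S k g}

/-- Inclusion of families of operations. -/
def CloneLE (C D : ∀ k : ℕ, Set (DMFun k)) : Prop := ∀ k : ℕ, C k ⊆ D k


/-! ### Auxiliary material for Statement 18 -/

instance : Fintype DM4 := ⟨{t, f, n, b}, by intro x; cases x <;> simp⟩

lemma mem_Des {a : DM4} : a ∈ Des ↔ (a = t ∨ a = b) := by simp [Des]

/-- Symmetrized, negation-invariant version of a binary operation. -/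
def mAux (r : DM4 → DM4 → DM4) (x y : DM4) : DM4 :=
  meet (meet (r x y) (r y x)) (meet (r (neg x) (neg y)) (r (neg y) (neg x)))

lemma mem_of_eq {C : ∀ k : ℕ, Set (DMFun k)} {k : ℕ} {g g' : DMFun k}
    (h : g ∈ C k) (e : ∀ v, g v = g' v) : g' ∈ C k := by
  have : g = g' := funext e
  exact this ▸ h

lemma comp1 {C : ∀ k : ℕ, Set (DMFun k)} (hC : IsClone C) (g : DM4 → DM4)
    (hg : toF1 g ∈ C 0) {k : ℕ} {p : DMFun k} (hp : p ∈ C k) :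
    (fun v => g (p v)) ∈ C k := by
  have h := hC.comp k 0 (toF1 g) ![p] hg (by intro i; fin_cases i <;> simp <;> assumption)
  exact mem_of_eq h (by intro v; simp [toF1])

lemma comp2 {C : ∀ k : ℕ, Set (DMFun k)} (hC : IsClone C) (g : DM4 → DM4 → DM4)
    (hg : toF2 g ∈ C 1) {k : ℕ} {p q : DMFun k} (hp : p ∈ C k) (hq : q ∈ C k) :
    (fun v => g (p v) (q v)) ∈ C k := by
  have h := hC.comp k 1 (toF2 g) ![p, q] hg
    (by intro i; fin_cases i <;> simp <;> assumption)
  exact mem_of_eq h (by intro v; simp [toF2])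

lemma mAux_diag (r : DM4 → DM4 → DM4) (h : ∀ a, r a a = t ∨ r a a = b) :
    ∀ a, mAux r a a = t ∨ mAux r a a = b := by
  intro a
  rcases h a with h1 | h1 <;> rcases h (neg a) with h2 | h2 <;>
    simp [mAux, h1, h2, meet]

lemma mAux_off (r : DM4 → DM4 → DM4)
    (h : ∀ a c, (a = t ∨ a = b) → (c = f ∨ c = n) → (r a c = f ∨ r a c = n)) :
    ∀ a c, a ≠ c → mAux r a c = f ∨ mAux r a c = n := by
  have ll : ∀ x y : DM4, (x = f ∨ x = n) → (meet x y = f ∨ meet x y = n) := by decide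
  have lr : ∀ x y : DM4, (y = f ∨ y = n) → (meet x y = f ∨ meet x y = n) := by decide
  intro a c hne
  cases a <;> cases c <;>
    first
      | exact absurd rfl hne
      | (simp only [mAux, neg]
         first
           | exact ll _ _ (ll _ _ (h _ _ (by decide) (by decide)))
           | exact ll _ _ (lr _ _ (h _ _ (by decide) (by decide)))
           | exact lr _ _ (ll _ _ (h _ _ (by decide) (by decide)))
           | exact lr _ _ (lr _ _ (h _ _ (by decide) (by decide))))

lemma mAux_symm (r : DM4 → DM4 → DM4) (x y : DM4) : mAux r x y = mAux r y x := by
  have key : ∀ u v w z : DM4, meet (meet u v) (meet w z) = meet (meet v u) (meet z w) := by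
    decide
  exact key _ _ _ _

/-- The protoimplication generated by □ together with DMA. -/
def boxImp (x y : DM4) : DM4 := join y (box (neg (meet x (box (join x (neg y))))))

lemma boxImp_proto : IsProtoimplication boxImp := by
  constructor
  · intro a
    rw [mem_Des]
    cases a <;> decide
  · intro a c ha hc
    rw [mem_Des] at ha hc ⊢
    rcases ha with rfl | rfl <;> cases c <;> revert hc <;> decide

lemma tmin_proto : IsProtoimplication tmin := by
  constructor
  · intro a
    rw [mem_Des]
    cases a <;> decide
  · intro a c ha hc
    rw [mem_Des] at ha hc ⊢
    rcases ha with rfl | rfl <;> cases c <;> revert hc <;> decide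

lemma imin_proto : IsProtoimplication imin := by
  constructor
  · intro a
    rw [mem_Des]
    cases a <;> decide
  · intro a c ha hc
    rw [mem_Des] at ha hc ⊢
    rcases ha with rfl | rfl <;> cases c <;> revert hc <;> decide

/-- A clone above DMA contains a protoimplication iff it contains
one of the functions □, ↔_{t-min}, ↔_{i-min}. -/
theorem protoalgebraic_clones (C : ∀ k : ℕ, Set (DMFun k))
    (hC : IsClone C) (hDMA : ∀ k g, InClone DMAGen k g → g ∈ C k) :
    (∃ r : DM4 → DM4 → DM4, toF2 r ∈ C 1 ∧ IsProtoimplication r) ↔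
    (toF1 box ∈ C 0 ∨ toF2 tmin ∈ C 1 ∨ toF2 imin ∈ C 1) := by
  have hmeet : toF2 meet ∈ C 1 := hDMA 1 _ (.base (Or.inl (Or.inl rfl)))
  have hjoin : toF2 join ∈ C 1 := hDMA 1 _ (.base (Or.inl (Or.inr (Or.inl rfl))))
  have hneg : toF1 neg ∈ C 0 := hDMA 0 _ (.base (Or.inr rfl))
  have hct : toF1 (fun _ => t) ∈ C 0 :=
    hDMA 0 _ (.base (Or.inl (Or.inr (Or.inr (Or.inl rfl)))))
  have hcf : toF1 (fun _ => f) ∈ C 0 :=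
    hDMA 0 _ (.base (Or.inl (Or.inr (Or.inr (Or.inr rfl)))))
  constructor
  · rintro ⟨r, hrC, hr⟩
    -- basic facts about the protoimplication r
    have hDes : ∀ a, r a a = t ∨ r a a = b := by
      intro a
      have := hr.1 a
      rwa [mem_Des] at this
    have hND : ∀ a c, (a = t ∨ a = b) → (c = f ∨ c = n) → (r a c = f ∨ r a c = n) := by
      intro a c ha hc
      have hcD : c ∉ Des := by
        rw [mem_Des]; rcases hc with rfl | rfl <;> decide
      have hra : a ∈ Des := by rw [mem_Des]; exact ha
      have hn : r a c ∉ Des := fun hm => hcD (hr.2 a c hra hm)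
      rw [mem_Des] at hn
      cases hrc : r a c
      · exact absurd (by rw [hrc]; exact Or.inl rfl) hn
      · exact Or.inl rfl
      · exact Or.inr rfl
      · exact absurd (by rw [hrc]; exact Or.inr rfl) hn
    have hdiag := mAux_diag r hDes
    have hoff := mAux_off r hND
    -- clone membership of mAux r, as a binary clone element
    have p0 : (fun v : Fin 2 → DM4 => v 0) ∈ C 1 := hC.proj 1 0
    have p1 : (fun v : Fin 2 → DM4 => v 1) ∈ C 1 := hC.proj 1 1
    have n0 := comp1 hC neg hneg p0
    have n1 := comp1 hC neg hneg p1
    have hA := comp2 hC r hrC p0 p1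
    have hB := comp2 hC r hrC p1 p0
    have hCc := comp2 hC r hrC n0 n1
    have hD := comp2 hC r hrC n1 n0
    have hM0 := comp2 hC meet hmeet (comp2 hC meet hmeet hA hB) (comp2 hC meet hmeet hCc hD)
    have hM : toF2 (mAux r) ∈ C 1 := mem_of_eq hM0 (by intro v; rfl)
    have cT1 := comp1 hC (fun _ => t) hct p0
    have cF1 := comp1 hC (fun _ => f) hcf p0
    have hM' := comp2 hC (mAux r) hM p0 p1
    rcases hdiag t with hTT | hTT
    · -- case mAux r t t = t : look at mAux r t f
      rcases hoff t f (by decide) with hTF | hTF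
      · -- box is in the clone
        left
        have q0 : (fun v : Fin 1 → DM4 => v 0) ∈ C 0 := hC.proj 0 0
        have cT0 := comp1 hC (fun _ => t) hct q0
        have e1 := comp2 hC (mAux r) hM q0 cT0
        have nq0 := comp1 hC neg hneg q0
        have e2 := comp2 hC (mAux r) hM nq0 q0
        have e3 := comp1 hC neg hneg e2
        have final := comp2 hC meet hmeet e1 e3
        refine mem_of_eq final ?_
        intro v
        show meet (mAux r (v 0) t) (neg (mAux r (neg (v 0)) (v 0))) = box (v 0)
        have hFT : mAux r f t = f := (mAux_symm r f t).trans hTF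
        cases hv : v 0
        · show meet (mAux r t t) (neg (mAux r f t)) = t
          rw [hTT, hFT]; rfl
        · show meet (mAux r f t) (neg (mAux r t f)) = f
          rw [hFT, hTF]; rfl
        · show meet (mAux r n t) (neg (mAux r n n)) = f
          rcases hoff n t (by decide) with h1 | h1 <;> rcases hdiag n with h2 | h2 <;>
            rw [h1, h2] <;> rfl
        · show meet (mAux r b t) (neg (mAux r b b)) = f
          rcases hoff b t (by decide) with h1 | h1 <;> rcases hdiag b with h2 | h2 <;>
            rw [h1, h2] <;> rfl
      · -- imin is in the clone
        right; right
        have cTF := comp2 hC (mAux r) hM cT1 cF1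
        have final := comp2 hC join hjoin hM' cTF
        refine mem_of_eq final ?_
        intro v
        show join (mAux r (v 0) (v 1)) (mAux r t f) = imin (v 0) (v 1)
        rw [hTF]
        by_cases e : v 0 = v 1
        · rw [e]
          rcases hdiag (v 1) with h' | h' <;> rw [h'] <;> simp [imin, join]
        · rcases hoff (v 0) (v 1) e with h' | h' <;> rw [h'] <;> simp [imin, e, join]
    · -- case mAux r t t = b : tmin is in the clone
      right; left
      have cTT := comp2 hC (mAux r) hM cT1 cT1
      have final := comp2 hC meet hmeet hM' cTT
      refine mem_of_eq final ?_
      intro v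
      show meet (mAux r (v 0) (v 1)) (mAux r t t) = tmin (v 0) (v 1)
      rw [hTT]
      by_cases e : v 0 = v 1
      · rw [e]
        rcases hdiag (v 1) with h' | h' <;> rw [h'] <;> simp [tmin, meet]
      · rcases hoff (v 0) (v 1) e with h' | h' <;> rw [h'] <;> simp [tmin, e, meet]
  · rintro (hbox | htmin | himin)
    · -- build the protoimplication boxImp from box and DMA
      refine ⟨boxImp, ?_, boxImp_proto⟩
      have p0 : (fun v : Fin 2 → DM4 => v 0) ∈ C 1 := hC.proj 1 0
      have p1 : (fun v : Fin 2 → DM4 => v 1) ∈ C 1 := hC.proj 1 1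
      have t1 := comp1 hC neg hneg p1
      have t2 := comp2 hC join hjoin p0 t1
      have t3 := comp1 hC box hbox t2
      have t4 := comp2 hC meet hmeet p0 t3
      have t5 := comp1 hC neg hneg t4
      have t6 := comp1 hC box hbox t5
      have t7 := comp2 hC join hjoin p1 t6
      exact mem_of_eq t7 (by intro v; rfl)
    · exact ⟨tmin, htmin, tmin_proto⟩
    · exact ⟨imin, himin, imin_proto⟩

end DM4
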